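/- Let α = arccos(4/5). The set of points (cos(n·α), sin(n·α)) for n ranging over the integers is dense in the unit circle {(x,y) ∈ ℝ² : x² + y² = 1}. -/
import Mathlib

open Real

noncomputable def α : ℝ := Real.arccos (4/5)

lemma cosα : Real.cos α = 4/5 := Real.cos_arccos (by norm_num) (by norm_num)

/-- cos(n α) = a_n / 5^n with 5 ∤ a_n. -/
lemma key (n : ℕ) : (∃ a : ℤ, Real.cos (n * α) = a / 5 ^ n ∧ ¬ (5 : ℤ) ∣ a) ∧
    (∃ a : ℤ, Real.cos ((n+1) * α) = a / 5 ^ (n+1) ∧ ¬ (5 : ℤ) ∣ a) := by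
  induction n with
  | zero =>
    constructor
    · exact ⟨1, by simp, by norm_num⟩
    · exact ⟨4, by simpa using cosα, by norm_num⟩
  | succ n ih =>
    refine ⟨by push_cast; push_cast at ih; exact ih.2, ?_⟩
    obtain ⟨⟨a, ha, ha5⟩, ⟨b, hb, hb5⟩⟩ := ih
    refine ⟨8 * b - 25 * a, ?_, ?_⟩
    · have h1 : Real.cos (((n:ℝ)+1) * α + α) + Real.cos (((n:ℝ)+1) * α - α)
          = 2 * Real.cos (((n:ℝ)+1) * α) * Real.cos α := by
        rw [Real.cos_add, Real.cos_sub]; ring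
      have h2 : ((n:ℝ)+1) * α + α = ((n:ℝ)+1+1) * α := by ring
      have h3 : ((n:ℝ)+1) * α - α = (n:ℝ) * α := by ring
      rw [h2, h3] at h1
      have : Real.cos (((n:ℝ)+1+1) * α) = 2 * Real.cos (((n:ℝ)+1) * α) * Real.cos α
          - Real.cos ((n:ℝ) * α) := by linarith
      push_cast
      rw [this, hb, ha, cosα]
      push_cast
      field_simp
      ring
    · intro hdvd
      have : (5:ℤ) ∣ 8 * b := by omega
      have := (Int.Prime.dvd_mul' (by norm_num) this).resolve_left (by norm_num)
      exact hb5 this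

lemma alpha_irr : ∀ a : ℝ, ¬ (α ∈ AddSubgroup.zmultiples a ∧ 2 * π ∈ AddSubgroup.zmultiples a) := by
  rintro a ⟨⟨m, hm⟩, ⟨k, hk⟩⟩
  simp only [zsmul_eq_mul] at hm hk
  have hk0 : k ≠ 0 := by
    rintro rfl
    simp at hk
  have hcos : Real.cos ((k : ℝ) * α) = 1 := by
    have : (k : ℝ) * α = (m : ℝ) * (2 * π) := by
      rw [← hm, ← hk]; ring
    rw [this]
    exact Real.cos_int_mul_two_pi m
  set N := k.natAbs with hN
  have hN1 : 1 ≤ N := by omega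
  have hcN : Real.cos ((N : ℝ) * α) = 1 := by
    rcases Int.natAbs_eq k with h | h
    · rw [show ((N:ℝ)) = (k:ℝ) from by exact_mod_cast (show ((N:ℤ)) = k by omega)]
      exact hcos
    · have hkk : ((N:ℝ)) = -(k:ℝ) := by exact_mod_cast (by omega : (N:ℤ) = -k)
      rw [hkk, neg_mul, Real.cos_neg]
      exact hcos
  obtain ⟨⟨a, ha, ha5⟩, -⟩ := key N
  rw [hcN] at ha
  have h5 : (0:ℝ) < 5 ^ N := by positivity
  have : (a : ℝ) = 5 ^ N := by field_simp at ha; linarith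
  have haz : a = 5 ^ N := by exact_mod_cast this
  apply ha5
  rw [haz]
  exact dvd_pow_self 5 (by omega)


/-- For `α = arccos (4/5)`, the points `(cos (n·α), sin (n·α))`, `n ∈ ℤ`, are
dense in the unit circle. -/
theorem orbit_dense_in_circle
    (p : ℝ × ℝ) (hp : p.1 ^ 2 + p.2 ^ 2 = 1) :
    p ∈ closure {q : ℝ × ℝ | ∃ n : ℤ,
      q = (Real.cos ((n : ℝ) * Real.arccos (4 / 5)),
           Real.sin ((n : ℝ) * Real.arccos (4 / 5)))} := by
  set S : AddSubgroup ℝ := AddSubgroup.zmultiples α ⊔ AddSubgroup.zmultiples (2 * π) with hS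
  have hdense : Dense (S : Set ℝ) := by
    rcases S.dense_or_cyclic with h | ⟨a, ha⟩
    · exact h
    · exfalso
      apply alpha_irr a
      rw [← AddSubgroup.zmultiples_eq_closure] at ha
      constructor
      · rw [← ha]
        exact AddSubgroup.mem_sup_left (AddSubgroup.mem_zmultiples α)
      · rw [← ha]
        exact AddSubgroup.mem_sup_right (AddSubgroup.mem_zmultiples (2 * π))
  -- find θ with cos θ = p.1, sin θ = p.2
  obtain ⟨θ, hc, hs⟩ : ∃ θ : ℝ, Real.cos θ = p.1 ∧ Real.sin θ = p.2 := by
    have h1 : -1 ≤ p.1 := by nlinarith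
    have h2 : p.1 ≤ 1 := by nlinarith
    have hsin : Real.sin (Real.arccos p.1) = Real.sqrt (1 - p.1 ^ 2) := by
      rw [Real.sin_arccos]
    have hsq : Real.sqrt (1 - p.1 ^ 2) = |p.2| := by
      rw [show 1 - p.1 ^ 2 = p.2 ^ 2 by linarith]
      exact Real.sqrt_sq_eq_abs p.2
    rcases le_or_gt 0 p.2 with h | h
    · exact ⟨Real.arccos p.1, Real.cos_arccos h1 h2, by rw [hsin, hsq, abs_of_nonneg h]⟩
    · exact ⟨-Real.arccos p.1, by rw [Real.cos_neg]; exact Real.cos_arccos h1 h2,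
        by rw [Real.sin_neg, hsin, hsq, abs_of_neg h]; ring⟩
  have hθ : θ ∈ closure (S : Set ℝ) := hdense θ
  have hf : Continuous (fun t : ℝ => (Real.cos t, Real.sin t)) :=
    Real.continuous_cos.prodMk Real.continuous_sin
  have hp' : p = (fun t : ℝ => (Real.cos t, Real.sin t)) θ := by
    simp [hc, hs]
  rw [hp']
  have himg : (fun t : ℝ => (Real.cos t, Real.sin t)) '' (S : Set ℝ) ⊆
      {q : ℝ × ℝ | ∃ n : ℤ, q = (Real.cos ((n : ℝ) * Real.arccos (4 / 5)),
        Real.sin ((n : ℝ) * Real.arccos (4 / 5)))} := by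
    rintro q ⟨x, hx, rfl⟩
    rw [SetLike.mem_coe, AddSubgroup.mem_sup] at hx
    obtain ⟨y, ⟨n, rfl⟩, z, ⟨m, rfl⟩, rfl⟩ := hx
    refine ⟨n, ?_⟩
    simp only [zsmul_eq_mul]
    rw [Real.cos_add_int_mul_two_pi, Real.sin_add_int_mul_two_pi]
    rfl
  exact closure_mono himg (image_closure_subset_closure_image hf ⟨θ, hθ, rfl⟩)
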